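/- The derivative of the Riemann zeta function at −2 equals −ζ(3)/(4π²), i.e. ζ′(−2) = −ζ(3)/(4π²). -/
import Mathlib


open Complex

theorem deriv_riemannZeta_neg_two :
    deriv riemannZeta (-2) = -riemannZeta 3 / (4 * (Real.pi : ℂ) ^ 2) := by
  set π : ℝ := Real.pi
  have hπ : (π : ℂ) ≠ 0 := by exact_mod_cast Real.pi_ne_zero
  have h2π : (2 : ℂ) * (π : ℂ) ≠ 0 := mul_ne_zero two_ne_zero hπ
  set A : ℂ → ℂ := fun s => 2 * (2 * (π : ℂ)) ^ (-s) * Complex.Gamma s * riemannZeta s with hA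
  have hev : (fun s => riemannZeta (1 - s)) =ᶠ[nhds (3 : ℂ)]
      (fun s => A s * Complex.cos ((π : ℂ) * s / 2)) := by
    have hopen : IsOpen {s : ℂ | 2 < s.re} := isOpen_lt continuous_const Complex.continuous_re
    have h3 : (3 : ℂ) ∈ {s : ℂ | 2 < s.re} := by norm_num
    filter_upwards [hopen.mem_nhds h3] with s hs
    have hs2 : 2 < s.re := hs
    have hsn : ∀ n : ℕ, s ≠ -n := by
      intro n hn
      rw [hn] at hs2
      simp only [neg_re, natCast_re] at hs2
      have := Nat.cast_nonneg (α := ℝ) n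
      linarith
    have hs1 : s ≠ 1 := by
      intro h; rw [h] at hs2; norm_num at hs2
    rw [riemannZeta_one_sub hsn hs1, hA]
    ring
  have hζ3 : (1 : ℂ) - 3 = -2 := by norm_num
  have hdζ : DifferentiableAt ℂ riemannZeta (-2) := differentiableAt_riemannZeta (by norm_num)
  have h1 : HasDerivAt (fun s : ℂ => 1 - s) (-1) 3 := by
    simpa using (hasDerivAt_id (3 : ℂ)).const_sub 1
  have hL : HasDerivAt (fun s => riemannZeta (1 - s)) (deriv riemannZeta (-2) * (-1)) 3 := by
    have h2 : HasDerivAt riemannZeta (deriv riemannZeta (-2)) ((fun s : ℂ => 1 - s) 3) := by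
      simpa [hζ3] using hdζ.hasDerivAt
    exact h2.comp 3 h1
  have hdA : DifferentiableAt ℂ A 3 := by
    apply DifferentiableAt.mul
    apply DifferentiableAt.mul
    · exact (differentiableAt_id.neg.const_cpow (Or.inl h2π)).const_mul 2
    · refine Complex.differentiableAt_Gamma _ (fun m h => ?_)
      have := congrArg Complex.re h
      simp only [neg_re, natCast_re] at this
      have h0 : (0 : ℝ) ≤ (m : ℝ) := Nat.cast_nonneg m
      norm_num at this
      linarith
    · exact differentiableAt_riemannZeta (by norm_num)
  have hAd : HasDerivAt A (deriv A 3) 3 := hdA.hasDerivAt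
  have hcos : HasDerivAt (fun s : ℂ => Complex.cos ((π : ℂ) * s / 2))
      (-Complex.sin ((π : ℂ) * 3 / 2) * ((π : ℂ) / 2)) 3 := by
    have hu : HasDerivAt (fun s : ℂ => (π : ℂ) * s / 2) ((π : ℂ) / 2) 3 := by
      simpa using ((hasDerivAt_id (3 : ℂ)).const_mul ((π : ℂ))).div_const 2
    exact (Complex.hasDerivAt_cos _).comp 3 hu
  have hR : HasDerivAt (fun s => A s * Complex.cos ((π : ℂ) * s / 2))
      (deriv A 3 * Complex.cos ((π : ℂ) * 3 / 2) +
        A 3 * (-Complex.sin ((π : ℂ) * 3 / 2) * ((π : ℂ) / 2))) 3 := hAd.mul hcos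
  have hcast : ((π : ℂ) * 3 / 2) = ((Real.pi * 3 / 2 : ℝ) : ℂ) := by push_cast; ring
  have hc : Complex.cos ((π : ℂ) * 3 / 2) = 0 := by
    rw [hcast, ← Complex.ofReal_cos, Complex.ofReal_eq_zero,
      show Real.pi * 3 / 2 = Real.pi + Real.pi / 2 by ring]
    simp [Real.cos_add]
  have hsin : Complex.sin ((π : ℂ) * 3 / 2) = -1 := by
    rw [hcast, ← Complex.ofReal_sin,
      show Real.pi * 3 / 2 = Real.pi + Real.pi / 2 by ring]
    simp [Real.sin_add]
  have heq : deriv riemannZeta (-2) * (-1) =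
      deriv A 3 * Complex.cos ((π : ℂ) * 3 / 2) +
        A 3 * (-Complex.sin ((π : ℂ) * 3 / 2) * ((π : ℂ) / 2)) := by
    rw [← hL.deriv, ← hR.deriv]
    exact Filter.EventuallyEq.deriv_eq hev
  rw [hc, hsin] at heq
  have hΓ : Complex.Gamma 3 = 2 := by
    have h := Complex.Gamma_nat_eq_factorial 2
    norm_num [Nat.factorial] at h
    simpa using h
  have hpow : (2 * (π : ℂ)) ^ (-(3 : ℂ)) = ((2 * (π : ℂ)) ^ (3 : ℕ))⁻¹ := by
    rw [← Complex.cpow_natCast, ← Complex.cpow_neg]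
    norm_num
  have hA3 : A 3 = 2 * ((2 * (π : ℂ)) ^ (3 : ℕ))⁻¹ * 2 * riemannZeta 3 := by
    rw [hA]
    simp only [hΓ, ← hpow]
  rw [hA3] at heq
  have hinv : ((2 * (π : ℂ)) ^ (3 : ℕ))⁻¹ * ((2 * (π : ℂ)) ^ (3 : ℕ)) = 1 :=
    inv_mul_cancel₀ (pow_ne_zero 3 h2π)
  have hne : (4 : ℂ) * (π : ℂ) ^ 2 ≠ 0 := mul_ne_zero (by norm_num) (pow_ne_zero 2 hπ)
  rw [eq_div_iff hne]
  have key : (4 * (π : ℂ)) * (deriv riemannZeta (-2) * (4 * (π : ℂ) ^ 2) - (-riemannZeta 3)) = 0 := by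
    linear_combination (-16 * (π : ℂ) ^ 3) * heq + (-4 * (π : ℂ) * riemannZeta 3) * hinv
  have h4π : (4 : ℂ) * (π : ℂ) ≠ 0 := mul_ne_zero (by norm_num) hπ
  have := (mul_eq_zero.mp key).resolve_left h4π
  linear_combination this
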